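/- Suppose conditions (C) hold: γ(S,σ) + 2ξ(S)·η(σ) < 1 and ξ(S) − η(σ) ≤ 1, and suppose ξ_i(S) > 0 for all i. Then there exists exactly one u ∈ ℂ^n with all components nonzero such that u = F(u) and |u_i − (1 − η_i(σ))| ≤ r̲·ξ_i(S) for all i = 1,…,n; that is, the fixed-point power flow equation has a unique solution in the closure of D(r̲). -/

import Mathlib

open Complex

/-- `η_i(σ) := Σ_j Z̃_{ij} · conj(σ_j)` -/
noncomputable def etaI {n : ℕ} (Z : Matrix (Fin n) (Fin n) ℂ) (σ : Fin n → ℂ) (i : Fin n) : ℂ :=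
  ∑ j, Z i j * (starRingEnd ℂ) (σ j)

/-- `ξ_i(S) := Σ_j |Z̃_{ij} · S_j|` -/
noncomputable def xiI {n : ℕ} (Z : Matrix (Fin n) (Fin n) ℂ) (S : Fin n → ℂ) (i : Fin n) : ℝ :=
  ∑ j, ‖Z i j * S j‖

/-- `γ_i(S,σ) := 2(ξ_i(S) + Re η_i(σ)) − ξ_i(S)² − |η_i(σ)|²` -/
noncomputable def gammaI {n : ℕ} (Z : Matrix (Fin n) (Fin n) ℂ) (S σ : Fin n → ℂ)
    (i : Fin n) : ℝ :=
  2 * (xiI Z S i + (etaI Z σ i).re) - (xiI Z S i) ^ 2 - ‖etaI Z σ i‖ ^ 2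

/-- `η(σ) := max_i |η_i(σ)|` -/
noncomputable def etaMax {n : ℕ} (Z : Matrix (Fin n) (Fin n) ℂ) (σ : Fin n → ℂ) : ℝ :=
  ⨆ i, ‖etaI Z σ i‖

/-- `ξ(S) := max_i ξ_i(S)` -/
noncomputable def xiMax {n : ℕ} (Z : Matrix (Fin n) (Fin n) ℂ) (S : Fin n → ℂ) : ℝ :=
  ⨆ i, xiI Z S i

/-- `γ(S,σ) := max_i γ_i(S,σ)` -/
noncomputable def gammaMax {n : ℕ} (Z : Matrix (Fin n) (Fin n) ℂ) (S σ : Fin n → ℂ) : ℝ :=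
  ⨆ i, gammaI Z S σ i

/-- `r̲ := sqrt((1−γ − √Δ)/(2ξ(S)²))` where `Δ = (1−γ)² − 4ξ(S)²η(σ)²` -/
noncomputable def rLow {n : ℕ} (Z : Matrix (Fin n) (Fin n) ℂ) (S σ : Fin n → ℂ) : ℝ :=
  Real.sqrt ((1 - gammaMax Z S σ -
      Real.sqrt ((1 - gammaMax Z S σ) ^ 2 - 4 * (xiMax Z S) ^ 2 * (etaMax Z σ) ^ 2)) /
    (2 * (xiMax Z S) ^ 2))

/-- `r̄ := sqrt((1−γ + √Δ)/(2ξ(S)²))` where `Δ = (1−γ)² − 4ξ(S)²η(σ)²` -/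
noncomputable def rHigh {n : ℕ} (Z : Matrix (Fin n) (Fin n) ℂ) (S σ : Fin n → ℂ) : ℝ :=
  Real.sqrt ((1 - gammaMax Z S σ +
      Real.sqrt ((1 - gammaMax Z S σ) ^ 2 - 4 * (xiMax Z S) ^ 2 * (etaMax Z σ) ^ 2)) /
    (2 * (xiMax Z S) ^ 2))

/-- the fixed point power flow map
`F(u)_i := 1 − Σ_j Z̃_{ij}·conj(σ_j) + Σ_j Z̃_{ij}·(1 − 1/conj(u_j))·conj(S_j)` -/
noncomputable def pfMap {n : ℕ} (Z : Matrix (Fin n) (Fin n) ℂ) (S σ : Fin n → ℂ)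
    (u : Fin n → ℂ) : Fin n → ℂ :=
  fun i => 1 - ∑ j, Z i j * (starRingEnd ℂ) (σ j)
    + ∑ j, Z i j * (1 - 1 / (starRingEnd ℂ) (u j)) * (starRingEnd ℂ) (S j)

open Metric Set Filter Topology ComplexConjugate

/-!
Substituting `w_j = 1 - 1 / conj u_j` turns `u = F(u)` into the fixed-point problem `w = T(w)` with
`T(w)_j = 1 - 1 / conj ((1 - η_j) + Σ_k Z̃_jk conj(S_k) w_k)` on a polydisc. The numbers `r̲²` and
`r̄²` are the roots of `t ↦ (1 - γ) t - ξ² t² - η²`, which is positive between them; together with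
`ξ (1 - r̲²) ≤ 1` (where `ξ - η ≤ 1` enters) this puts each disc `|u_i - (1 - η_i)| ≤ ρ ξ_i`,
`r̲ < ρ < r̄`, inside the Apollonius disc `|u_i - 1| < ρ |u_i|`. Hence `T` maps the closed polydisc
of radius `ρ` strictly inside itself and the one of radius `r̲` into itself. As `T` is
antiholomorphic, the Schwarz–Pick lemma makes it a strict contraction for the pseudo-hyperbolic
distance of the polydisc of radius `ρ` (Earle–Hamilton), so Picard iteration converges to a
fixed point in the polydisc of radius `r̲`, and it is the only one there.
-/

/-- The involution of the unit disc exchanging `a` and `0`. -/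
noncomputable def diskAut (a z : ℂ) : ℂ := (a - z) / (1 - conj a * z)

/-- The pseudo-hyperbolic distance of the unit disc. -/
noncomputable def pseudoDist (a b : ℂ) : ℝ := ‖diskAut a b‖

lemma norm_one_sub_conj_mul_sq_sub_norm_sub_sq (a b : ℂ) :
    ‖1 - conj a * b‖ ^ 2 - ‖a - b‖ ^ 2 = (1 - ‖a‖ ^ 2) * (1 - ‖b‖ ^ 2) := by
  simp only [Complex.sq_norm, Complex.normSq_apply, Complex.sub_re, Complex.sub_im,
    Complex.mul_re, Complex.mul_im, Complex.conj_re, Complex.conj_im, Complex.one_re,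
    Complex.one_im]
  ring

lemma one_sub_conj_mul_ne_zero {a b : ℂ} (ha : ‖a‖ < 1) (hb : ‖b‖ ≤ 1) :
    1 - conj a * b ≠ 0 := by
  intro h
  have : ‖conj a * b‖ < 1 := by
    rw [norm_mul, Complex.norm_conj]
    nlinarith [norm_nonneg a, norm_nonneg b]
  simp [← sub_eq_zero.mp h] at this

lemma norm_sub_lt_norm_one_sub_conj_mul {a b : ℂ} (ha : ‖a‖ < 1) (hb : ‖b‖ < 1) :
    ‖a - b‖ < ‖1 - conj a * b‖ := by
  have := norm_one_sub_conj_mul_sq_sub_norm_sub_sq a b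
  have : 0 < (1 - ‖a‖ ^ 2) * (1 - ‖b‖ ^ 2) := by
    apply mul_pos <;> nlinarith [norm_nonneg a, norm_nonneg b]
  nlinarith [norm_nonneg (a - b), norm_nonneg (1 - conj a * b)]

@[simp]
lemma diskAut_zero (a : ℂ) : diskAut a 0 = a := by
  simp [diskAut]

@[simp]
lemma diskAut_self (a : ℂ) : diskAut a a = 0 := by
  simp [diskAut]

lemma norm_diskAut_lt_one {a z : ℂ} (ha : ‖a‖ < 1) (hz : ‖z‖ < 1) : ‖diskAut a z‖ < 1 := by
  rw [diskAut, norm_div, div_lt_one (norm_pos_iff.2 (one_sub_conj_mul_ne_zero ha hz.le))]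
  exact norm_sub_lt_norm_one_sub_conj_mul ha hz

lemma diskAut_diskAut {a z : ℂ} (ha : ‖a‖ < 1) (hz : ‖z‖ ≤ 1) : diskAut a (diskAut a z) = z := by
  have hz' := one_sub_conj_mul_ne_zero ha hz
  have ha' := one_sub_conj_mul_ne_zero ha ha.le
  have key : 1 - conj a * diskAut a z = (1 - conj a * a) / (1 - conj a * z) := by
    rw [diskAut]
    field_simp
    ring
  have hz'' : 1 - z * conj a ≠ 0 := by rwa [mul_comm]
  have ha'' : 1 - a * conj a ≠ 0 := by rwa [mul_comm]
  rw [diskAut, key, diskAut]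
  field_simp
  ring

lemma DifferentiableOn.diskAut {g : ℂ → ℂ} {s : Set ℂ} {a : ℂ} (hg : DifferentiableOn ℂ g s)
    (ha : ‖a‖ < 1) (hgs : ∀ z ∈ s, ‖g z‖ ≤ 1) :
    DifferentiableOn ℂ (fun z => _root_.diskAut a (g z)) s :=
  ((differentiableOn_const a).sub hg).div ((differentiableOn_const 1).sub (hg.const_mul _))
    fun z hz => one_sub_conj_mul_ne_zero ha (hgs z hz)

lemma pseudoDist_nonneg (a b : ℂ) : 0 ≤ pseudoDist a b := norm_nonneg _

lemma pseudoDist_conj (a b : ℂ) : pseudoDist (conj a) (conj b) = pseudoDist a b := by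
  rw [pseudoDist, pseudoDist, ← Complex.norm_conj (diskAut a b), diskAut, diskAut]
  simp [map_div₀]

lemma eq_of_pseudoDist_eq_zero {a b : ℂ} (ha : ‖a‖ < 1) (hb : ‖b‖ ≤ 1)
    (h : pseudoDist a b = 0) : a = b := by
  rw [pseudoDist, norm_eq_zero, diskAut, div_eq_zero_iff] at h
  exact sub_eq_zero.1 (h.resolve_right (one_sub_conj_mul_ne_zero ha hb))

lemma norm_sub_le_two_mul_pseudoDist {a b : ℂ} (ha : ‖a‖ < 1) (hb : ‖b‖ ≤ 1) :
    ‖a - b‖ ≤ 2 * pseudoDist a b := by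
  have hne := one_sub_conj_mul_ne_zero ha hb
  have hden : ‖1 - conj a * b‖ ≤ 2 := by
    calc ‖1 - conj a * b‖ ≤ ‖(1 : ℂ)‖ + ‖conj a * b‖ := norm_sub_le _ _
      _ ≤ 2 := by
        rw [norm_mul, Complex.norm_conj, norm_one]
        nlinarith [norm_nonneg a, norm_nonneg b]
  rw [pseudoDist, diskAut, norm_div, mul_div_assoc', le_div_iff₀ (norm_pos_iff.2 hne)]
  nlinarith [norm_nonneg (a - b)]

/-- `2s / (1 + s²)` is the pseudo-hyperbolic distance between `s` and `-s`. -/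
lemma pseudoDist_le_of_norm_le {a b : ℂ} {s : ℝ} (hs : s ≤ 1) (ha : ‖a‖ ≤ s) (hb : ‖b‖ ≤ s) :
    pseudoDist a b ≤ 2 * s / (1 + s ^ 2) := by
  have hs0 : 0 ≤ s := (norm_nonneg a).trans ha
  have hid := norm_one_sub_conj_mul_sq_sub_norm_sub_sq a b
  have hden : ‖1 - conj a * b‖ ≤ 1 + s ^ 2 := by
    calc ‖1 - conj a * b‖ ≤ ‖(1 : ℂ)‖ + ‖conj a * b‖ := norm_sub_le _ _
      _ ≤ 1 + s ^ 2 := by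
        rw [norm_mul, Complex.norm_conj, norm_one]
        nlinarith [norm_nonneg a, norm_nonneg b]
  have ha2 := pow_le_pow_left₀ (norm_nonneg a) ha 2
  have hb2 := pow_le_pow_left₀ (norm_nonneg b) hb 2
  have hfac : (1 - s ^ 2) ^ 2 ≤ (1 - ‖a‖ ^ 2) * (1 - ‖b‖ ^ 2) := by
    rw [sq]; exact mul_le_mul (by linarith) (by linarith) (by nlinarith) (by nlinarith)
  have key : ‖a - b‖ * (1 + s ^ 2) ≤ 2 * s * ‖1 - conj a * b‖ := by
    refine le_of_sq_le_sq ?_ (by positivity)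
    nlinarith [mul_le_mul_of_nonneg_left hden (norm_nonneg (1 - conj a * b)),
      mul_nonneg (sq_nonneg (1 - s ^ 2)) (sq_nonneg (1 + s ^ 2 - ‖1 - conj a * b‖))]
  rcases eq_or_ne (1 - conj a * b) 0 with h0 | h0
  · simp only [pseudoDist, diskAut, h0, div_zero, norm_zero]; positivity
  rw [pseudoDist, diskAut, norm_div, div_le_div_iff₀ (norm_pos_iff.2 h0) (by positivity)]
  linarith

/-- Schwarz–Pick with a margin: the Schwarz lemma applies to `diskAut (ψ 0) ∘ ψ`, whose image
lies in the disc of radius `2s / (1 + s²)`. -/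
theorem pseudoDist_le_of_mapsTo_closedBall {ψ : ℂ → ℂ} {s : ℝ} (hs : s < 1)
    (hψ : DifferentiableOn ℂ ψ (ball 0 1)) (hmaps : MapsTo ψ (ball 0 1) (closedBall 0 s))
    {z : ℂ} (hz : z ∈ ball (0 : ℂ) 1) :
    pseudoDist (ψ 0) (ψ z) ≤ 2 * s / (1 + s ^ 2) * ‖z‖ := by
  have hbound : ∀ w ∈ ball (0 : ℂ) 1, ‖ψ w‖ ≤ s := fun w hw => mem_closedBall_zero_iff.1 (hmaps hw)
  have h0 : ‖ψ 0‖ < 1 := (hbound 0 (mem_ball_self one_pos)).trans_lt hs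
  have hdiff : DifferentiableOn ℂ (fun w => diskAut (ψ 0) (ψ w)) (ball 0 1) :=
    hψ.diskAut h0 fun w hw => (hbound w hw).trans hs.le
  have hmaps' : MapsTo (fun w => diskAut (ψ 0) (ψ w)) (ball 0 1)
      (closedBall (diskAut (ψ 0) (ψ 0)) (2 * s / (1 + s ^ 2))) := by
    intro w hw
    rw [diskAut_self, mem_closedBall_zero_iff]
    exact pseudoDist_le_of_norm_le hs.le (hbound 0 (mem_ball_self one_pos)) (hbound w hw)
  simpa [pseudoDist] using Complex.dist_le_div_mul_dist_of_mapsTo_ball hdiff hmaps' hz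

section Polydisc

variable {ι : Type*}

/-- The pseudo-hyperbolic (Carathéodory) distance of the polydisc of radius `R`. -/
noncomputable def polydiscDist (R : ℝ) (x y : ι → ℂ) : ℝ := ⨆ j, pseudoDist (x j / R) (y j / R)

lemma polydiscDist_nonneg (R : ℝ) (x y : ι → ℂ) : 0 ≤ polydiscDist R x y :=
  Real.iSup_nonneg fun _ => pseudoDist_nonneg _ _

variable [Fintype ι]

/-- Restrict `F` to the analytic disc `t ↦ (diskAut (x j) (θ j * t))_j`, which passes through `x`
at `0` and through `y` at `τ`. -/
theorem pseudoDist_le_mul_iSup_of_mapsTo_closedBall [Nonempty ι] {F : (ι → ℂ) → ℂ} {s : ℝ}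
    (hs : s < 1) (hF : DifferentiableOn ℂ F (ball 0 1))
    (hmaps : MapsTo F (ball 0 1) (closedBall 0 s))
    {x y : ι → ℂ} (hx : x ∈ ball 0 1) (hy : y ∈ ball 0 1) :
    pseudoDist (F x) (F y) ≤ 2 * s / (1 + s ^ 2) * ⨆ j, pseudoDist (x j) (y j) := by
  rw [mem_ball_zero_iff, pi_norm_lt_iff one_pos] at hx hy
  set τ := ⨆ j, pseudoDist (x j) (y j)
  have hle : ∀ j, pseudoDist (x j) (y j) ≤ τ := le_ciSup (Finite.bddAbove_range _)
  obtain hτ | hτ : 0 = τ ∨ 0 < τ :=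
    (Real.iSup_nonneg fun j => pseudoDist_nonneg (x j) (y j)).eq_or_lt
  · have hxy : x = y := funext fun j => eq_of_pseudoDist_eq_zero (hx j) (hy j).le
      ((hle j).trans hτ.ge |>.antisymm (pseudoDist_nonneg _ _))
    simp [hxy, ← hτ, pseudoDist]
  have hτ1 : τ < 1 := by
    obtain ⟨j, hj⟩ : ∃ j, pseudoDist (x j) (y j) = τ := exists_eq_ciSup_of_finite
    exact hj ▸ norm_diskAut_lt_one (hx j) (hy j)
  set θ : ι → ℂ := fun j => diskAut (x j) (y j) / τ
  have hθ : ∀ j, ‖θ j‖ ≤ 1 := fun j => by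
    rw [norm_div, Complex.norm_of_nonneg hτ.le, div_le_one hτ]; exact hle j
  have hθt : ∀ j, ∀ t ∈ ball (0 : ℂ) 1, ‖θ j * t‖ < 1 := fun j t ht => by
    rw [norm_mul]
    exact (mul_le_of_le_one_left (norm_nonneg _) (hθ j)).trans_lt (mem_ball_zero_iff.1 ht)
  set γ : ℂ → ι → ℂ := fun t j => diskAut (x j) (θ j * t)
  have hγ : MapsTo γ (ball 0 1) (ball 0 1) := fun t ht => by
    rw [mem_ball_zero_iff, pi_norm_lt_iff one_pos]
    exact fun j => norm_diskAut_lt_one (hx j) (hθt j t ht)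
  have hγdiff : DifferentiableOn ℂ γ (ball 0 1) := differentiableOn_pi.2 fun j =>
    (differentiableOn_id.const_mul _).diskAut (hx j) fun t ht => (hθt j t ht).le
  have hγ0 : γ 0 = x := funext fun j => by simp [γ]
  have hγτ : γ τ = y := funext fun j => by
    simp only [γ, θ, div_mul_cancel₀ _ (Complex.ofReal_ne_zero.2 hτ.ne')]
    exact diskAut_diskAut (hx j) (hy j).le
  have hτball : (τ : ℂ) ∈ ball (0 : ℂ) 1 := by
    rwa [mem_ball_zero_iff, Complex.norm_of_nonneg hτ.le]
  have := pseudoDist_le_of_mapsTo_closedBall hs (hF.comp hγdiff hγ) (hmaps.comp hγ) hτball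
  simpa [hγ0, hγτ, abs_of_pos hτ] using this

lemma pseudoDist_le_polydiscDist (R : ℝ) (x y : ι → ℂ) (j : ι) :
    pseudoDist (x j / R) (y j / R) ≤ polydiscDist R x y :=
  le_ciSup (f := fun j => pseudoDist (x j / R) (y j / R)) (Finite.bddAbove_range _) j

lemma norm_apply_div_lt_one {x : ι → ℂ} {R : ℝ} (hx : x ∈ ball 0 R) (j : ι) :
    ‖x j / R‖ < 1 := by
  have hR : 0 < R := pos_of_mem_ball hx
  rw [norm_div, Complex.norm_of_nonneg hR.le, div_lt_one hR]
  exact (norm_le_pi_norm x j).trans_lt (mem_ball_zero_iff.1 hx)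

lemma norm_sub_le_two_mul_polydiscDist {x y : ι → ℂ} {R : ℝ} (hx : x ∈ ball 0 R)
    (hy : y ∈ ball 0 R) : ‖x - y‖ ≤ 2 * R * polydiscDist R x y := by
  have hR : 0 < R := pos_of_mem_ball hx
  refine (pi_norm_le_iff_of_nonneg (by positivity [polydiscDist_nonneg R x y])).2 fun j => ?_
  have h := norm_sub_le_two_mul_pseudoDist (norm_apply_div_lt_one hx j)
    (norm_apply_div_lt_one hy j).le
  rw [← sub_div, norm_div, Complex.norm_of_nonneg hR.le, div_le_iff₀ hR] at h
  calc ‖(x - y) j‖ ≤ 2 * pseudoDist (x j / R) (y j / R) * R := h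
    _ ≤ 2 * R * polydiscDist R x y := by
      nlinarith [pseudoDist_le_polydiscDist R x y j]

lemma eq_of_polydiscDist_le_mul_self {x y : ι → ℂ} {R m : ℝ} (hx : x ∈ ball 0 R)
    (hy : y ∈ ball 0 R) (hm : m < 1) (h : polydiscDist R x y ≤ m * polydiscDist R x y) :
    x = y := by
  have hR : 0 < R := pos_of_mem_ball hx
  have h0 : polydiscDist R x y = 0 := by nlinarith [polydiscDist_nonneg R x y]
  funext j
  have hj := eq_of_pseudoDist_eq_zero (norm_apply_div_lt_one hx j) (norm_apply_div_lt_one hy j).le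
    ((pseudoDist_le_polydiscDist R x y j).trans h0.le |>.antisymm (pseudoDist_nonneg _ _))
  rwa [div_left_inj' (Complex.ofReal_ne_zero.2 hR.ne')] at hj

/-- Conjugation preserves `pseudoDist`, so this is the holomorphic case after rescaling to the
unit polydisc. -/
theorem polydiscDist_le_of_antiholomorphic [Nonempty ι] {T : (ι → ℂ) → ι → ℂ} {R d : ℝ}
    (hdR : d < R) (hT : DifferentiableOn ℂ (fun w => T (star w)) (ball 0 R))
    (hmaps : MapsTo T (ball 0 R) (closedBall 0 d)) {x y : ι → ℂ} (hx : x ∈ ball 0 R)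
    (hy : y ∈ ball 0 R) :
    polydiscDist R (T x) (T y) ≤ 2 * (d / R) / (1 + (d / R) ^ 2) * polydiscDist R x y := by
  have hR : 0 < R := pos_of_mem_ball hx
  have hRC : (R : ℂ) ≠ 0 := Complex.ofReal_ne_zero.2 hR.ne'
  have hscale : MapsTo (fun z : ι → ℂ => (R : ℂ) • z) (ball 0 1) (ball 0 R) := fun z hz => by
    rw [mem_ball_zero_iff, norm_smul, Complex.norm_of_nonneg hR.le]
    simpa [hR] using mul_lt_mul_of_pos_left (mem_ball_zero_iff.1 hz) hR
  have hstar : ∀ v : ι → ℂ, star ((R : ℂ) • ((R : ℂ)⁻¹ • star v)) = v := fun v => by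
    rw [smul_inv_smul₀ hRC, star_star]
  have hunit : ∀ v ∈ ball (0 : ι → ℂ) R, (R : ℂ)⁻¹ • star v ∈ ball 0 1 := fun v hv => by
    rw [mem_ball_zero_iff, norm_smul, norm_star, norm_inv, Complex.norm_of_nonneg hR.le,
      inv_mul_lt_one₀ hR]
    exact mem_ball_zero_iff.1 hv
  refine ciSup_le fun i => ?_
  set F : (ι → ℂ) → ℂ := fun z => T (star ((R : ℂ) • z)) i / R
  have hF : DifferentiableOn ℂ F (ball 0 1) := by
    simp_rw [F, div_eq_mul_inv]
    exact ((differentiableOn_pi.1 hT i).comp (differentiableOn_id.const_smul (R : ℂ))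
      hscale).mul_const _
  have hFmaps : MapsTo F (ball 0 1) (closedBall 0 (d / R)) := fun z hz => by
    have hTz := mem_closedBall_zero_iff.1 <| hmaps <| show star ((R : ℂ) • z) ∈ ball 0 R by
      rw [mem_ball_zero_iff, norm_star]; exact mem_ball_zero_iff.1 (hscale hz)
    rw [mem_closedBall_zero_iff, norm_div, Complex.norm_of_nonneg hR.le]
    exact div_le_div_of_nonneg_right ((norm_le_pi_norm _ i).trans hTz) hR.le
  have := pseudoDist_le_mul_iSup_of_mapsTo_closedBall ((div_lt_one hR).2 hdR) hF hFmaps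
    (hunit x hx) (hunit y hy)
  simp only [F, hstar] at this
  refine this.trans_eq (congrArg _ (iSup_congr fun j => ?_))
  rw [← pseudoDist_conj]
  simp [div_eq_inv_mul]

theorem exists_fixedPoint_of_polydiscDist_le {T : (ι → ℂ) → ι → ℂ} {r R m : ℝ} (hr : 0 ≤ r)
    (hrR : r < R) (hm0 : 0 ≤ m) (hm : m < 1) (hmaps : MapsTo T (closedBall 0 r) (closedBall 0 r))
    (hcont : ContinuousOn T (closedBall 0 r))
    (hcontr : ∀ x ∈ closedBall (0 : ι → ℂ) r, ∀ y ∈ closedBall 0 r,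
      polydiscDist R (T x) (T y) ≤ m * polydiscDist R x y) :
    ∃ w ∈ closedBall 0 r, T w = w := by
  have hsub : closedBall (0 : ι → ℂ) r ⊆ ball 0 R := closedBall_subset_ball hrR
  set W : ℕ → ι → ℂ := fun k => T^[k] 0
  have hW : ∀ k, W k ∈ closedBall 0 r := fun k => hmaps.iterate k (mem_closedBall_self hr)
  have hWs : ∀ k, W (k + 1) = T (W k) := fun k => Function.iterate_succ_apply' T k 0
  set D := polydiscDist R (W 0) (W 1)
  have hdecay : ∀ k, polydiscDist R (W k) (W (k + 1)) ≤ m ^ k * D := by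
    intro k
    induction k with
    | zero => simp [D]
    | succ k ih =>
      calc polydiscDist R (W (k + 1)) (W (k + 1 + 1))
          = polydiscDist R (T (W k)) (T (W (k + 1))) := by rw [hWs (k + 1), hWs k]
        _ ≤ m * polydiscDist R (W k) (W (k + 1)) := hcontr _ (hW k) _ (hW (k + 1))
        _ ≤ m * (m ^ k * D) := mul_le_mul_of_nonneg_left ih hm0
        _ = m ^ (k + 1) * D := by ring
  have hcauchy : CauchySeq W := by
    refine cauchySeq_of_le_geometric m (2 * R * D) hm fun k => ?_
    have hR : 0 ≤ 2 * R := by linarith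
    calc dist (W k) (W (k + 1)) ≤ 2 * R * polydiscDist R (W k) (W (k + 1)) := by
          rw [dist_eq_norm]; exact norm_sub_le_two_mul_polydiscDist (hsub (hW k)) (hsub (hW _))
      _ ≤ 2 * R * (m ^ k * D) := mul_le_mul_of_nonneg_left (hdecay k) hR
      _ = 2 * R * D * m ^ k := by ring
  obtain ⟨w, hw⟩ := cauchySeq_tendsto_of_complete hcauchy
  have hwmem : w ∈ closedBall 0 r := isClosed_closedBall.mem_of_tendsto hw (Eventually.of_forall hW)
  refine ⟨w, hwmem, tendsto_nhds_unique ?_ (hw.comp (tendsto_add_atTop_nat 1))⟩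
  have hT := (hcont w hwmem).tendsto.comp (tendsto_nhdsWithin_iff.2 ⟨hw, Eventually.of_forall hW⟩)
  simpa [Function.comp_def, hWs] using hT

/-- A version of the Earle–Hamilton fixed point theorem on the polydisc. -/
theorem existsUnique_fixedPoint_of_antiholomorphic [Nonempty ι] {T : (ι → ℂ) → ι → ℂ}
    {r d R : ℝ} (hr : 0 ≤ r) (hrR : r < R) (hdR : d < R)
    (hT : DifferentiableOn ℂ (fun w => T (star w)) (ball 0 R))
    (hball : MapsTo T (ball 0 R) (closedBall 0 d))
    (hmaps : MapsTo T (closedBall 0 r) (closedBall 0 r)) :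
    ∃! w, w ∈ closedBall 0 r ∧ T w = w := by
  have hR : 0 < R := hr.trans_lt hrR
  have hsub : closedBall (0 : ι → ℂ) r ⊆ ball 0 R := closedBall_subset_ball hrR
  have hd : 0 ≤ d / R :=
    div_nonneg ((norm_nonneg _).trans (mem_closedBall_zero_iff.1 (hball (mem_ball_self hR)))) hR.le
  have hdR' : d / R < 1 := (div_lt_one hR).2 hdR
  have hm : 2 * (d / R) / (1 + (d / R) ^ 2) < 1 := by
    rw [div_lt_one (by positivity)]; nlinarith
  have hcontr : ∀ x ∈ closedBall (0 : ι → ℂ) r, ∀ y ∈ closedBall 0 r,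
      polydiscDist R (T x) (T y) ≤ 2 * (d / R) / (1 + (d / R) ^ 2) * polydiscDist R x y :=
    fun x hx y hy => polydiscDist_le_of_antiholomorphic hdR hT hball (hsub hx) (hsub hy)
  have hcont : ContinuousOn T (closedBall 0 r) := by
    have := hT.continuousOn.comp continuous_star.continuousOn fun w hw => by
      rw [mem_ball_zero_iff, norm_star]; exact mem_ball_zero_iff.1 (hsub hw)
    simpa [Function.comp_def] using this
  obtain ⟨w, hw, hTw⟩ := exists_fixedPoint_of_polydiscDist_le hr hrR (by positivity) hm hmaps hcont
    hcontr
  refine ⟨w, ⟨hw, hTw⟩, fun v ⟨hv, hTv⟩ => eq_of_polydiscDist_le_mul_self (hsub hv) (hsub hw) hm ?_⟩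
  simpa [hTv, hTw] using hcontr v hv w hw

end Polydisc

/-- The right-hand side is the minimum of `ρ² |x|² - |x - 1|²` over the circle
`|x - (1 - η)| = D`, where `β = Re η`, `b = |η|` and `W = |ρ² + (1 - ρ²) η|`. -/
lemma quadratic_gap_pos {ξ ρ β b W D : ℝ} (hξ : 0 < ξ) (hρ : 0 < ρ) (hξρ : ξ * (1 - ρ ^ 2) ≤ 1)
    (hW : 0 ≤ W) (hW2 : W ^ 2 = ρ ^ 4 + 2 * ρ ^ 2 * (1 - ρ ^ 2) * β + (1 - ρ ^ 2) ^ 2 * b ^ 2)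
    (hD : 0 ≤ D) (hDP : D ≤ ρ * ξ)
    (hQ : 0 < (1 - (2 * (ξ + β) - ξ ^ 2 - b ^ 2)) * ρ ^ 2 - ξ ^ 2 * ρ ^ 4 - b ^ 2) :
    0 < (1 - 2 * β + b ^ 2) * ρ ^ 2 - b ^ 2 - 2 * W * D - (1 - ρ ^ 2) * D ^ 2 := by
  set Q := (1 - (2 * (ξ + β) - ξ ^ 2 - b ^ 2)) * ρ ^ 2 - ξ ^ 2 * ρ ^ 4 - b ^ 2
  set A := (1 - 2 * β + b ^ 2) * ρ ^ 2 - b ^ 2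
  set s := 1 - ρ ^ 2
  set P := ρ * ξ
  have hP : 0 ≤ P := by positivity
  have hT : A - s * P ^ 2 = Q + 2 * ξ * ρ ^ 2 * (1 - ξ * s) := by ring
  have hT2 : (A - s * P ^ 2) ^ 2 - (2 * P * W) ^ 2 = Q ^ 2 + 4 * ξ * ρ ^ 2 * Q := by
    simp only [Q, A, s, P]; linear_combination (-4 * (ρ * ξ) ^ 2) * hW2
  -- the value at the endpoint `D = P`
  have hend : 2 * P * W < A - s * P ^ 2 := by
    have hTpos : 0 < A - s * P ^ 2 := by
      rw [hT]; have : 0 ≤ 1 - ξ * s := by linarith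
      positivity
    refine (pow_lt_pow_iff_left₀ (by positivity) hTpos.le two_ne_zero).1 ?_
    nlinarith [mul_pos (mul_pos hξ (pow_pos hρ 2)) hQ]
  by_cases hmono : 0 ≤ 2 * W + s * (P + D)
  · nlinarith [mul_nonneg (sub_nonneg.2 hDP) hmono]
  · -- convex case with the minimum inside `[0, P]`
    have hs : s < 0 := by
      by_contra! hs; exact hmono (by positivity)
    have hWP : W < -s * P := by nlinarith
    have hW2P : W ^ 2 < s ^ 2 * P ^ 2 := by nlinarith
    have : 0 < -s * (A - 2 * W * D - s * D ^ 2) := by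
      nlinarith [sq_nonneg (s * D + W), mul_pos (neg_pos.2 hs) (mul_pos hξ (pow_pos hρ 2))]
    exact pos_of_mul_pos_right this (by linarith)

theorem norm_sub_one_lt_mul_norm {ξ ρ : ℝ} {η x : ℂ} (hξ : 0 < ξ) (hρ : 0 < ρ)
    (hξρ : ξ * (1 - ρ ^ 2) ≤ 1)
    (hQ : 0 < (1 - (2 * (ξ + η.re) - ξ ^ 2 - ‖η‖ ^ 2)) * ρ ^ 2 - ξ ^ 2 * ρ ^ 4 - ‖η‖ ^ 2)
    (hx : ‖x - (1 - η)‖ ≤ ρ * ξ) : ‖x - 1‖ < ρ * ‖x‖ := by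
  set d := x - (1 - η)
  set v : ℂ := ρ ^ 2 + (1 - ρ ^ 2) * η
  have hsq : ∀ z : ℂ, ‖z‖ ^ 2 = z.re ^ 2 + z.im ^ 2 := fun z => by
    rw [Complex.sq_norm, Complex.normSq_apply]; ring
  have hgap : (ρ * ‖x‖) ^ 2 - ‖x - 1‖ ^ 2 = (1 - 2 * η.re + ‖η‖ ^ 2) * ρ ^ 2 - ‖η‖ ^ 2
      + 2 * (conj v * d).re - (1 - ρ ^ 2) * ‖d‖ ^ 2 := by
    have hxd : x = 1 - η + d := by ring
    rw [mul_pow, hsq, hsq, hsq, hsq, hxd]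
    simp only [v, Complex.add_re, Complex.add_im, Complex.sub_re, Complex.sub_im, Complex.mul_re,
      Complex.mul_im, Complex.conj_re, Complex.conj_im, Complex.one_re, Complex.one_im,
      Complex.ofReal_re, Complex.ofReal_im, ← Complex.ofReal_pow]
    ring
  have hv : ‖v‖ ^ 2 = ρ ^ 4 + 2 * ρ ^ 2 * (1 - ρ ^ 2) * η.re + (1 - ρ ^ 2) ^ 2 * ‖η‖ ^ 2 := by
    rw [hsq, hsq]
    simp only [v, Complex.add_re, Complex.add_im, Complex.mul_re, Complex.mul_im, Complex.sub_re,
      Complex.sub_im, Complex.one_re, Complex.one_im, Complex.ofReal_re, Complex.ofReal_im,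
      ← Complex.ofReal_pow]
    ring
  have hre : -(‖v‖ * ‖d‖) ≤ (conj v * d).re := by
    have := Complex.abs_re_le_norm (conj v * d)
    rw [norm_mul, Complex.norm_conj] at this
    linarith [neg_abs_le (conj v * d).re]
  have := quadratic_gap_pos hξ hρ hξρ (norm_nonneg v) hv (norm_nonneg d) hx hQ
  refine (pow_lt_pow_iff_left₀ (norm_nonneg _) (by positivity) two_ne_zero).1 ?_
  nlinarith

section Quadratic

variable {c X E : ℝ}

lemma quadratic_eq_mul_sub_mul_sub (hX : X ≠ 0) (hΔ : 0 ≤ c ^ 2 - 4 * X ^ 2 * E ^ 2) (t : ℝ) :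
    c * t - X ^ 2 * t ^ 2 - E ^ 2 =
      X ^ 2 * (t - (c - √(c ^ 2 - 4 * X ^ 2 * E ^ 2)) / (2 * X ^ 2)) *
        ((c + √(c ^ 2 - 4 * X ^ 2 * E ^ 2)) / (2 * X ^ 2) - t) := by
  have h := Real.sq_sqrt hΔ
  generalize √(c ^ 2 - 4 * X ^ 2 * E ^ 2) = r at h ⊢
  field_simp
  linear_combination (-1 : ℝ) * h

lemma le_of_quadratic_nonpos (hX : 0 < X) (hΔ : 0 ≤ c ^ 2 - 4 * X ^ 2 * E ^ 2) {t : ℝ}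
    (hq : c * t - X ^ 2 * t ^ 2 - E ^ 2 ≤ 0) (ht : 2 * X ^ 2 * t < c) :
    t ≤ (c - √(c ^ 2 - 4 * X ^ 2 * E ^ 2)) / (2 * X ^ 2) := by
  rw [quadratic_eq_mul_sub_mul_sub hX.ne' hΔ] at hq
  have hupper : 0 < (c + √(c ^ 2 - 4 * X ^ 2 * E ^ 2)) / (2 * X ^ 2) - t := by
    rw [sub_pos, lt_div_iff₀ (by positivity)]
    nlinarith [Real.sqrt_nonneg (c ^ 2 - 4 * X ^ 2 * E ^ 2)]
  by_contra! h
  exact hq.not_gt (mul_pos (mul_pos (pow_pos hX 2) (sub_pos.2 h)) hupper)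

lemma quadratic_pos (hX : 0 < X) (hΔ : 0 ≤ c ^ 2 - 4 * X ^ 2 * E ^ 2) {t : ℝ}
    (h₁ : (c - √(c ^ 2 - 4 * X ^ 2 * E ^ 2)) / (2 * X ^ 2) < t)
    (h₂ : t < (c + √(c ^ 2 - 4 * X ^ 2 * E ^ 2)) / (2 * X ^ 2)) :
    0 < c * t - X ^ 2 * t ^ 2 - E ^ 2 := by
  rw [quadratic_eq_mul_sub_mul_sub hX.ne' hΔ]
  exact mul_pos (mul_pos (pow_pos hX 2) (sub_pos.2 h₁)) (sub_pos.2 h₂)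

end Quadratic

lemma norm_one_sub_one_div_conj {x : ℂ} (hx : x ≠ 0) : ‖1 - 1 / conj x‖ = ‖x - 1‖ / ‖x‖ := by
  rw [← norm_div, ← Complex.norm_conj (1 - 1 / conj x)]
  simp [map_sub, sub_div, div_self hx]

lemma ne_zero_of_norm_sub_one_le {x : ℂ} {ρ : ℝ} (h : ‖x - 1‖ ≤ ρ * ‖x‖) : x ≠ 0 := by
  rintro rfl
  norm_num at h

lemma norm_one_sub_one_div_conj_le {x : ℂ} {ρ : ℝ} (h : ‖x - 1‖ ≤ ρ * ‖x‖) :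
    ‖1 - 1 / conj x‖ ≤ ρ := by
  have hx := ne_zero_of_norm_sub_one_le h
  rwa [norm_one_sub_one_div_conj hx, div_le_iff₀ (norm_pos_iff.2 hx)]

lemma norm_one_sub_one_div_conj_lt {x : ℂ} {ρ : ℝ} (h : ‖x - 1‖ < ρ * ‖x‖) :
    ‖1 - 1 / conj x‖ < ρ := by
  have hx := ne_zero_of_norm_sub_one_le h.le
  rwa [norm_one_sub_one_div_conj hx, div_lt_iff₀ (norm_pos_iff.2 hx)]

section PowerFlow

variable {n : ℕ} {Z : Matrix (Fin n) (Fin n) ℂ} {S σ : Fin n → ℂ}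

variable (Z S σ) in
lemma xiI_le_xiMax (i : Fin n) : xiI Z S i ≤ xiMax Z S :=
  le_ciSup (f := xiI Z S) (Finite.bddAbove_range _) i

variable (Z σ) in
lemma norm_etaI_le_etaMax (i : Fin n) : ‖etaI Z σ i‖ ≤ etaMax Z σ :=
  le_ciSup (f := fun i => ‖etaI Z σ i‖) (Finite.bddAbove_range _) i

variable (Z S σ) in
lemma gammaI_le_gammaMax (i : Fin n) : gammaI Z S σ i ≤ gammaMax Z S σ :=
  le_ciSup (f := gammaI Z S σ) (Finite.bddAbove_range _) i

/-- The voltage as an affine function of the variable `w_j = 1 - 1 / conj u_j`. -/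
noncomputable def pfVoltage (Z : Matrix (Fin n) (Fin n) ℂ) (S σ w : Fin n → ℂ) : Fin n → ℂ :=
  fun i => 1 - etaI Z σ i + ∑ j, Z i j * conj (S j) * w j

/-- The fixed-point map `F` in the variable `w_j = 1 - 1 / conj u_j`. -/
noncomputable def pfReducedMap (Z : Matrix (Fin n) (Fin n) ℂ) (S σ w : Fin n → ℂ) : Fin n → ℂ :=
  fun j => 1 - 1 / conj (pfVoltage Z S σ w j)

lemma pfMap_eq_pfVoltage (u : Fin n → ℂ) :
    pfMap Z S σ u = pfVoltage Z S σ (fun j => 1 - 1 / conj (u j)) := by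
  funext i
  simp only [pfMap, pfVoltage, etaI]
  congr 1
  exact Finset.sum_congr rfl fun j _ => by ring

lemma norm_pfVoltage_sub_le {w : Fin n → ℂ} {ρ : ℝ} (hw : ‖w‖ ≤ ρ) (i : Fin n) :
    ‖pfVoltage Z S σ w i - (1 - etaI Z σ i)‖ ≤ ρ * xiI Z S i := by
  calc ‖pfVoltage Z S σ w i - (1 - etaI Z σ i)‖ = ‖∑ j, Z i j * conj (S j) * w j‖ := by
        simp [pfVoltage]
    _ ≤ ∑ j, ‖Z i j * S j‖ * ρ := norm_sum_le_of_le _ fun j _ => by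
        rw [norm_mul, norm_mul, norm_mul, Complex.norm_conj]
        exact mul_le_mul_of_nonneg_left ((norm_le_pi_norm w j).trans hw) (by positivity)
    _ = ρ * xiI Z S i := by rw [← Finset.sum_mul, mul_comm, xiI]

/-- Conditions (C), together with `ξ_i(S) > 0` at every node. -/
structure PFConditions (Z : Matrix (Fin n) (Fin n) ℂ) (S σ : Fin n → ℂ) : Prop where
  gammaMax_add_lt : gammaMax Z S σ + 2 * xiMax Z S * etaMax Z σ < 1
  xiMax_sub_etaMax_le : xiMax Z S - etaMax Z σ ≤ 1
  xiI_pos : ∀ i, 0 < xiI Z S i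

namespace PFConditions

lemma two_mul_lt (hC : PFConditions Z S σ) :
    2 * xiMax Z S * etaMax Z σ < 1 - gammaMax Z S σ := by
  linarith [hC.gammaMax_add_lt]

variable [Nonempty (Fin n)]

lemma xiMax_pos (hC : PFConditions Z S σ) : 0 < xiMax Z S :=
  (hC.xiI_pos (Classical.arbitrary _)).trans_le (xiI_le_xiMax Z S _)

lemma etaMax_nonneg : 0 ≤ etaMax Z σ :=
  (norm_nonneg _).trans (norm_etaI_le_etaMax Z σ (Classical.arbitrary _))

lemma discriminant_pos (hC : PFConditions Z S σ) :
    0 < (1 - gammaMax Z S σ) ^ 2 - 4 * xiMax Z S ^ 2 * etaMax Z σ ^ 2 := by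
  have := mul_nonneg hC.xiMax_pos.le (etaMax_nonneg : 0 ≤ etaMax Z σ)
  nlinarith [hC.two_mul_lt]

lemma sqrt_discriminant_le (hC : PFConditions Z S σ) :
    √((1 - gammaMax Z S σ) ^ 2 - 4 * xiMax Z S ^ 2 * etaMax Z σ ^ 2) ≤ 1 - gammaMax Z S σ := by
  have := mul_nonneg hC.xiMax_pos.le (etaMax_nonneg : 0 ≤ etaMax Z σ)
  rw [Real.sqrt_le_left (by linarith [hC.two_mul_lt])]
  nlinarith

lemma rLow_sq (hC : PFConditions Z S σ) :
    rLow Z S σ ^ 2 = (1 - gammaMax Z S σ -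
      √((1 - gammaMax Z S σ) ^ 2 - 4 * xiMax Z S ^ 2 * etaMax Z σ ^ 2)) / (2 * xiMax Z S ^ 2) :=
  Real.sq_sqrt (div_nonneg (sub_nonneg.2 hC.sqrt_discriminant_le) (by positivity))

lemma rHigh_sq (hC : PFConditions Z S σ) :
    rHigh Z S σ ^ 2 = (1 - gammaMax Z S σ +
      √((1 - gammaMax Z S σ) ^ 2 - 4 * xiMax Z S ^ 2 * etaMax Z σ ^ 2)) / (2 * xiMax Z S ^ 2) := by
  have := hC.sqrt_discriminant_le
  have := Real.sqrt_nonneg ((1 - gammaMax Z S σ) ^ 2 - 4 * xiMax Z S ^ 2 * etaMax Z σ ^ 2)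
  exact Real.sq_sqrt (div_nonneg (by linarith) (by positivity))

lemma rLow_lt_rHigh (hC : PFConditions Z S σ) : rLow Z S σ < rHigh Z S σ := by
  have hsq : rLow Z S σ ^ 2 < rHigh Z S σ ^ 2 := by
    rw [hC.rLow_sq, hC.rHigh_sq]
    have := Real.sqrt_pos.2 hC.discriminant_pos
    have := hC.xiMax_pos
    gcongr
    linarith
  exact lt_of_pow_lt_pow_left₀ 2 (Real.sqrt_nonneg _) hsq

lemma quadratic_pos_of_mem (hC : PFConditions Z S σ) {ρ : ℝ} (h₁ : rLow Z S σ < ρ)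
    (h₂ : ρ < rHigh Z S σ) :
    0 < (1 - gammaMax Z S σ) * ρ ^ 2 - xiMax Z S ^ 2 * ρ ^ 4 - etaMax Z σ ^ 2 := by
  have hρ : 0 ≤ ρ := (Real.sqrt_nonneg _).trans h₁.le
  rw [show ρ ^ 4 = (ρ ^ 2) ^ 2 by ring]
  refine quadratic_pos hC.xiMax_pos hC.discriminant_pos.le ?_ ?_
  · rw [← hC.rLow_sq]; exact pow_lt_pow_left₀ h₁ (Real.sqrt_nonneg _) two_ne_zero
  · rw [← hC.rHigh_sq]; exact pow_lt_pow_left₀ h₂ hρ two_ne_zero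

/-- Condition `ξ(S) - η(σ) ≤ 1` enters here: at a node where `ξ_i(S) = ξ(S) > 1`, the bound on
`γ_i` makes the quadratic nonpositive at `1 - 1/ξ(S)`, which therefore lies below `r̲²`. -/
lemma xiMax_mul_one_sub_rLow_sq_le (hC : PFConditions Z S σ) :
    xiMax Z S * (1 - rLow Z S σ ^ 2) ≤ 1 := by
  have hX := hC.xiMax_pos
  have hE : 0 ≤ etaMax Z σ := etaMax_nonneg
  have hgap := hC.two_mul_lt
  have hlow : 0 ≤ rLow Z S σ ^ 2 := sq_nonneg _
  rcases le_or_gt (xiMax Z S) 1 with hX1 | hX1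
  · nlinarith
  obtain ⟨i, hi⟩ : ∃ i, xiI Z S i = xiMax Z S := exists_eq_ciSup_of_finite
  have hγ := gammaI_le_gammaMax Z S σ i
  rw [gammaI, hi] at hγ
  have hη := norm_etaI_le_etaMax Z σ i
  have hre : -‖etaI Z σ i‖ ≤ (etaI Z σ i).re := by
    linarith [neg_abs_le (etaI Z σ i).re, Complex.abs_re_le_norm (etaI Z σ i)]
  set X := xiMax Z S
  set E := etaMax Z σ
  set e := ‖etaI Z σ i‖
  have hXE : X - 1 ≤ E := by linarith [hC.xiMax_sub_etaMax_le]
  have hq : (1 - gammaMax Z S σ) * (X - 1) ≤ X * ((X - 1) ^ 2 + E ^ 2) := by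
    have h1 : 1 - gammaMax Z S σ ≤ (X - 1) ^ 2 + 2 * e + e ^ 2 := by nlinarith
    have he : 0 ≤ e := norm_nonneg _
    nlinarith [mul_le_mul_of_nonneg_right h1 (by linarith : (0 : ℝ) ≤ X - 1),
      mul_le_mul hη hη he hE, sq_nonneg (X - 1 - e)]
  set t := (X - 1) / X
  have hXt : X * t = X - 1 := mul_div_cancel₀ _ hX.ne'
  have hqt : X * ((1 - gammaMax Z S σ) * t - X ^ 2 * t ^ 2 - E ^ 2) ≤ 0 := by
    have : X * ((1 - gammaMax Z S σ) * t - X ^ 2 * t ^ 2 - E ^ 2) =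
        (1 - gammaMax Z S σ) * (X * t) - X * ((X * t) ^ 2 + E ^ 2) := by ring
    rw [this, hXt]; linarith
  have ht := le_of_quadratic_nonpos hX hC.discriminant_pos.le
    (nonpos_of_mul_nonpos_right hqt hX) (by nlinarith)
  rw [← hC.rLow_sq] at ht
  nlinarith

lemma norm_sub_one_lt (hC : PFConditions Z S σ) {ρ : ℝ} (h₁ : rLow Z S σ < ρ)
    (h₂ : ρ < rHigh Z S σ) {i : Fin n} {x : ℂ} (hx : ‖x - (1 - etaI Z σ i)‖ ≤ ρ * xiI Z S i) :
    ‖x - 1‖ < ρ * ‖x‖ := by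
  have hρ : 0 < ρ := (Real.sqrt_nonneg _).trans_lt h₁
  have hξ := hC.xiI_pos i
  have hξX := xiI_le_xiMax Z S i
  refine norm_sub_one_lt_mul_norm hξ hρ ?_ ?_ hx
  · have hlow := hC.xiMax_mul_one_sub_rLow_sq_le
    have hρ2 : rLow Z S σ ^ 2 ≤ ρ ^ 2 := pow_le_pow_left₀ (Real.sqrt_nonneg _) h₁.le 2
    rcases le_total (1 - ρ ^ 2) 0 with h | h
    · nlinarith
    · nlinarith [mul_le_mul hξX (by linarith : 1 - ρ ^ 2 ≤ 1 - rLow Z S σ ^ 2) h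
        hC.xiMax_pos.le]
  · have hq := hC.quadratic_pos_of_mem h₁ h₂
    have hγ := gammaI_le_gammaMax Z S σ i
    have hη := norm_etaI_le_etaMax Z σ i
    rw [gammaI] at hγ
    have hρ2 := sq_nonneg ρ
    nlinarith [mul_le_mul_of_nonneg_right hγ hρ2, mul_le_mul_of_nonneg_right
      (pow_le_pow_left₀ hξ.le hξX 2) (pow_nonneg hρ.le 4),
      pow_le_pow_left₀ (norm_nonneg (etaI Z σ i)) hη 2]

/-- The bound at `r̲` is the limit of the strict bounds for `r̲ < ρ < r̄`. -/
lemma norm_sub_one_le_rLow (hC : PFConditions Z S σ) {i : Fin n} {x : ℂ}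
    (hx : ‖x - (1 - etaI Z σ i)‖ ≤ rLow Z S σ * xiI Z S i) : ‖x - 1‖ ≤ rLow Z S σ * ‖x‖ := by
  have hlim : Tendsto (fun ρ => ρ * ‖x‖) (𝓝[>] rLow Z S σ) (𝓝 (rLow Z S σ * ‖x‖)) :=
    ((continuous_id.mul continuous_const).tendsto _).mono_left nhdsWithin_le_nhds
  refine ge_of_tendsto hlim ?_
  filter_upwards [Ioo_mem_nhdsGT hC.rLow_lt_rHigh] with ρ hρ
  exact (hC.norm_sub_one_lt hρ.1 hρ.2
    (hx.trans (mul_le_mul_of_nonneg_right hρ.1.le (hC.xiI_pos i).le))).le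

lemma mapsTo_pfReducedMap_rLow (hC : PFConditions Z S σ) :
    MapsTo (pfReducedMap Z S σ) (closedBall 0 (rLow Z S σ)) (closedBall 0 (rLow Z S σ)) := by
  intro w hw
  rw [mem_closedBall_zero_iff] at hw ⊢
  refine (pi_norm_le_iff_of_nonneg (Real.sqrt_nonneg _)).2 fun i => ?_
  exact norm_one_sub_one_div_conj_le (hC.norm_sub_one_le_rLow (norm_pfVoltage_sub_le hw i))

lemma norm_pfVoltage_sub_one_lt (hC : PFConditions Z S σ) {ρ : ℝ} (h₁ : rLow Z S σ < ρ)
    (h₂ : ρ < rHigh Z S σ) {w : Fin n → ℂ} (hw : ‖w‖ ≤ ρ) (i : Fin n) :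
    ‖pfVoltage Z S σ w i - 1‖ < ρ * ‖pfVoltage Z S σ w i‖ :=
  hC.norm_sub_one_lt h₁ h₂ (norm_pfVoltage_sub_le hw i)

lemma continuousOn_pfReducedMap (hC : PFConditions Z S σ) {ρ : ℝ} (h₁ : rLow Z S σ < ρ)
    (h₂ : ρ < rHigh Z S σ) : ContinuousOn (pfReducedMap Z S σ) (closedBall 0 ρ) := by
  refine continuousOn_pi.2 fun i => continuousOn_const.sub (continuousOn_const.div ?_ ?_)
  · exact Continuous.continuousOn (by unfold pfVoltage; fun_prop)
  · intro w hw
    rw [map_ne_zero]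
    exact ne_zero_of_norm_sub_one_le
      (hC.norm_pfVoltage_sub_one_lt h₁ h₂ (mem_closedBall_zero_iff.1 hw) i).le

lemma differentiableOn_pfReducedMap_star (hC : PFConditions Z S σ) {ρ : ℝ}
    (h₁ : rLow Z S σ < ρ) (h₂ : ρ < rHigh Z S σ) :
    DifferentiableOn ℂ (fun w => pfReducedMap Z S σ (star w)) (ball 0 ρ) := by
  have hconj : ∀ w i, conj (pfVoltage Z S σ (star w) i) =
      conj (1 - etaI Z σ i) + ∑ j, conj (Z i j) * S j * w j := fun w i => by
    simp [pfVoltage, map_sum]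
  refine differentiableOn_pi.2 fun i => ?_
  simp only [pfReducedMap, hconj, one_div]
  have hdiff : Differentiable ℂ fun w : Fin n → ℂ =>
      conj (1 - etaI Z σ i) + ∑ j, conj (Z i j) * S j * w j := by fun_prop
  refine (differentiableOn_const _).sub (hdiff.differentiableOn.fun_inv fun w hw => ?_)
  rw [← hconj, map_ne_zero]
  refine ne_zero_of_norm_sub_one_le (hC.norm_pfVoltage_sub_one_lt h₁ h₂ ?_ i).le
  rw [norm_star]
  exact (mem_ball_zero_iff.1 hw).le

/-- Compactness of the closed polydisc makes the bound `‖pfReducedMap Z S σ w‖ < ρ` uniform. -/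
lemma exists_mapsTo_closedBall_lt (hC : PFConditions Z S σ) {ρ : ℝ} (h₁ : rLow Z S σ < ρ)
    (h₂ : ρ < rHigh Z S σ) : ∃ d < ρ, MapsTo (pfReducedMap Z S σ) (ball 0 ρ) (closedBall 0 d) := by
  have hρ : 0 < ρ := (Real.sqrt_nonneg _).trans_lt h₁
  obtain ⟨w₀, hw₀, hmax⟩ := (isCompact_closedBall (0 : Fin n → ℂ) ρ).exists_isMaxOn
    (nonempty_closedBall.2 hρ.le)
    (continuous_norm.comp_continuousOn (hC.continuousOn_pfReducedMap h₁ h₂))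
  refine ⟨‖pfReducedMap Z S σ w₀‖, (pi_norm_lt_iff hρ).2 fun i => ?_, fun w hw => ?_⟩
  · exact norm_one_sub_one_div_conj_lt
      (hC.norm_pfVoltage_sub_one_lt h₁ h₂ (mem_closedBall_zero_iff.1 hw₀) i)
  · exact mem_closedBall_zero_iff.2 (hmax (ball_subset_closedBall hw))

theorem existsUnique_fixedPoint_pfReducedMap (hC : PFConditions Z S σ) :
    ∃! w, w ∈ closedBall 0 (rLow Z S σ) ∧ pfReducedMap Z S σ w = w := by
  have h := hC.rLow_lt_rHigh
  have h₁ : rLow Z S σ < (rLow Z S σ + rHigh Z S σ) / 2 := by linarith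
  have h₂ : (rLow Z S σ + rHigh Z S σ) / 2 < rHigh Z S σ := by linarith
  obtain ⟨d, hd, hmaps⟩ := hC.exists_mapsTo_closedBall_lt h₁ h₂
  exact existsUnique_fixedPoint_of_antiholomorphic (Real.sqrt_nonneg _) h₁ hd
    (hC.differentiableOn_pfReducedMap_star h₁ h₂) hmaps hC.mapsTo_pfReducedMap_rLow

end PFConditions

end PowerFlow

theorem pf_solution_exists_unique_general {n : ℕ} (hn : 1 ≤ n)
    (Z : Matrix (Fin n) (Fin n) ℂ)
    (σ S : Fin n → ℂ)
    (hc1 : gammaMax Z S σ + 2 * xiMax Z S * etaMax Z σ < 1)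
    (hc2 : xiMax Z S - etaMax Z σ ≤ 1)
    (hxi : ∀ i, 0 < xiI Z S i) :
    ∃! u : Fin n → ℂ, (∀ i, u i ≠ 0) ∧ pfMap Z S σ u = u ∧
      ∀ i, ‖u i - (1 - etaI Z σ i)‖ ≤ rLow Z S σ * xiI Z S i := by
  have : Nonempty (Fin n) := ⟨⟨0, hn⟩⟩
  have hC : PFConditions Z S σ := ⟨hc1, hc2, hxi⟩
  obtain ⟨w, ⟨hw, hfix⟩, hw_unique⟩ := hC.existsUnique_fixedPoint_pfReducedMap
  have hnear := norm_pfVoltage_sub_le (Z := Z) (S := S) (σ := σ) (mem_closedBall_zero_iff.1 hw)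
  refine ⟨pfVoltage Z S σ w, ⟨fun i => ne_zero_of_norm_sub_one_le (hC.norm_sub_one_le_rLow
    (hnear i)), by rw [pfMap_eq_pfVoltage]; exact congrArg _ hfix, hnear⟩, ?_⟩
  rintro u ⟨-, hu, hnear_u⟩
  have hwu : (fun j => 1 - 1 / conj (u j)) = w := by
    refine hw_unique _ ⟨?_, ?_⟩
    · refine mem_closedBall_zero_iff.2 ((pi_norm_le_iff_of_nonneg (Real.sqrt_nonneg _)).2 ?_)
      exact fun j => norm_one_sub_one_div_conj_le (hC.norm_sub_one_le_rLow (hnear_u j))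
    · funext j
      simp only [pfReducedMap, ← pfMap_eq_pfVoltage, hu]
  rw [← hu, pfMap_eq_pfVoltage, hwu]

/-- under conditions (C) with `ξ_i(S) > 0` for all `i`, the fixed point
power flow equation `u = F(u)` has exactly one solution in the closure of `D(r̲)`. -/
theorem pf_solution_exists_unique {n : ℕ} (hn : 1 ≤ n)
    (Z : Matrix (Fin n) (Fin n) ℂ) (hZ : IsUnit Z.det)
    (S0 σ S : Fin n → ℂ) (hS : S = S0 + σ)
    (hc1 : gammaMax Z S σ + 2 * xiMax Z S * etaMax Z σ < 1)
    (hc2 : xiMax Z S - etaMax Z σ ≤ 1)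
    (hxi : ∀ i, 0 < xiI Z S i) :
    ∃! u : Fin n → ℂ, (∀ i, u i ≠ 0) ∧ pfMap Z S σ u = u ∧
      ∀ i, ‖u i - (1 - etaI Z σ i)‖ ≤ rLow Z S σ * xiI Z S i :=
  pf_solution_exists_unique_general hn Z σ S hc1 hc2 hxi
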